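/- arXiv:1606.08456 — 4 statements merged into one kernel-verified Lean document; each statement's English description precedes it below -/
import Mathlib

section
/- Let R be a Noetherian integral domain and M a finitely generated R-module. Then there exists a nonzero element f ∈ R such that the localization M_f is a free module over R_f (Grothendieck's generic freeness lemma). -/
/-- Grothendieck's generic freeness lemma: if `R` is a Noetherian integral domain and
`M` a finitely generated `R`-module, then there is a nonzero `f : R` such that the
localization `M_f` is free over `R_f`. -/
theorem generic_freeness (R : Type*) [CommRing R] [IsDomain R] [IsNoetherianRing R]
    (M : Type*) [AddCommGroup M] [Module R M] [Module.Finite R M] :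
    ∃ f : R, f ≠ 0 ∧
      Module.Free (Localization.Away f) (LocalizedModule (Submonoid.powers f) M) := by
  have : Module.FinitePresentation R M := Module.finitePresentation_of_finite R M
  obtain ⟨r, hr, hfree, -⟩ :=
    Module.FinitePresentation.exists_free_localizedModule_powers (nonZeroDivisors R)
      (LocalizedModule.mkLinearMap (nonZeroDivisors R) M) (FractionRing R)
  exact ⟨r, nonZeroDivisors.ne_zero hr, hfree⟩
end

section
/- Let A be a finitely generated commutative algebra over an algebraically closed field k, and M a finitely generated A-module such that for every maximal ideal m of A, the fiber M/mM has k-dimension exactly n. If A is reduced, then M is a projective A-module of constant rank n. -/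
/-!
Fix a maximal ideal `m`, lift a `k`-basis of `M/mM` to `f : Aⁿ → M`, and use Nakayama to
find `r ∉ m` with `r • M ⊆ range f`. At every maximal ideal `m'` not containing `r`, the
reduction `Aⁿ/m'Aⁿ → M/m'M` is then a surjection between `k`-spaces of dimension `n` (the
Nullstellensatz gives `A/m' = k`), hence injective, so `ker f ⊆ m'Aⁿ`. Therefore the coordinates
of `r • ker f` lie in every maximal ideal, i.e. in the Jacobson radical, which for a reduced
Jacobson ring is zero. So `f` becomes an isomorphism once `r` is inverted, which makes `M_p`
free of rank `n` for every prime `p ⊆ m`.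
-/

open Submodule Function Module

lemma Ideal.Quotient.algebraMap_surjective_of_isAlgClosed (k : Type*) [Field k] [IsAlgClosed k]
    {A : Type*} [CommRing A] [Algebra k A] [Algebra.FiniteType k A] (m : Ideal A) [m.IsMaximal] :
    Surjective (algebraMap k (A ⧸ m)) := by
  let := Ideal.Quotient.field m
  have : Module.Finite k (A ⧸ m) := finite_of_finite_type_of_isJacobsonRing k _
  exact IsAlgClosed.algebraMap_bijective_of_isIntegral.2

section ResidueField

variable {k A N : Type*} [CommRing A] {I : Ideal A} [AddCommGroup N] [Module A N]

lemma span_range_mkQ_eq_top_of_surjective_algebraMap [CommRing k] [Algebra k A] [Module k N]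
    [IsScalarTower k A N] (hI : Surjective (algebraMap k (A ⧸ I)))
    {ι : Type*} {v : ι → N} (hv : span A (Set.range v) = ⊤) :
    span k (Set.range ((I • ⊤ : Submodule A N).mkQ ∘ v)) = ⊤ := by
  have hA : span A (Set.range ((I • ⊤ : Submodule A N).mkQ ∘ v)) = ⊤ := by
    rw [Set.range_comp, ← map_span, hv, Submodule.map_top, range_mkQ]
  rw [← restrictScalars_span k (A ⧸ I) hI, restrictScalars_eq_top_iff,
    ← restrictScalars_eq_top_iff A, restrictScalars_span A (A ⧸ I) Ideal.Quotient.mk_surjective,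
    hA]

variable [Field k] [Algebra k A] [Module k N] [IsScalarTower k A N]

lemma finite_quotient_smul_top_of_surjective_algebraMap (hI : Surjective (algebraMap k (A ⧸ I)))
    [Module.Finite A N] : Module.Finite k (N ⧸ (I • ⊤ : Submodule A N)) := by
  obtain ⟨n, v, hv⟩ := Module.Finite.exists_fin (R := A) (M := N)
  exact Module.finite_def.mpr <| fg_def.mpr
    ⟨_, Set.finite_range _, span_range_mkQ_eq_top_of_surjective_algebraMap hI hv⟩

lemma finrank_pi_quotient_smul_top_le (hI : Surjective (algebraMap k (A ⧸ I)))
    (ι : Type*) [Fintype ι] :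
    finrank k ((ι → A) ⧸ (I • ⊤ : Submodule A (ι → A))) ≤ Fintype.card ι :=
  finrank_le_of_span_eq_top
    (span_range_mkQ_eq_top_of_surjective_algebraMap hI (Pi.basisFun A ι).span_eq)

lemma exists_surjective_comp_mkQ_of_finrank_eq (hI : Surjective (algebraMap k (A ⧸ I)))
    [Module.Finite A N] {n : ℕ} (hdim : finrank k (N ⧸ (I • ⊤ : Submodule A N)) = n) :
    ∃ f : (Fin n → A) →ₗ[A] N, Surjective ((I • ⊤ : Submodule A N).mkQ ∘ₗ f) := by
  have := finite_quotient_smul_top_of_surjective_algebraMap hI (N := N)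
  let b := Module.finBasisOfFinrankEq k _ hdim
  choose x hx using fun i => Submodule.Quotient.mk_surjective _ (b i)
  refine ⟨Fintype.linearCombination A x, ?_⟩
  rw [← LinearMap.range_eq_top, ← restrictScalars_eq_top_iff k, eq_top_iff, ← b.span_eq,
    span_le]
  rintro _ ⟨i, rfl⟩
  exact ⟨Pi.single i 1, by simp [hx]⟩

lemma ker_le_smul_top_of_surjective_comp_mkQ (hI : Surjective (algebraMap k (A ⧸ I)))
    {ι : Type*} [Fintype ι] (f : (ι → A) →ₗ[A] N)
    (hdim : finrank k (N ⧸ (I • ⊤ : Submodule A N)) = Fintype.card ι)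
    (hf : Surjective ((I • ⊤ : Submodule A N).mkQ ∘ₗ f)) :
    LinearMap.ker f ≤ I • ⊤ := by
  let g := (mapQ _ _ f (smul_top_le_comap_smul_top I f)).restrictScalars k
  have hg_surj : Surjective g := by
    intro z
    obtain ⟨v, rfl⟩ := hf z
    exact ⟨Submodule.Quotient.mk v, rfl⟩
  have := finite_quotient_smul_top_of_surjective_algebraMap hI (N := ι → A)
  have := Module.Finite.of_surjective g hg_surj
  have hg_inj : Injective g := by
    refine (LinearMap.injective_iff_surjective_of_finrank_eq_finrank ?_).mpr hg_surj
    exact le_antisymm ((finrank_pi_quotient_smul_top_le hI ι).trans hdim.ge)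
      (LinearMap.finrank_le_finrank_of_surjective hg_surj)
  intro v hv
  rw [← Submodule.Quotient.mk_eq_zero]
  exact hg_inj (by simp [g, LinearMap.mem_ker.mp hv])

end ResidueField

section

variable {A N M : Type*} [CommRing A] [AddCommGroup N] [Module A N] [AddCommGroup M] [Module A M]

lemma apply_mem_of_mem_smul_top {ι : Type*} {I : Ideal A} {v : ι → A}
    (hv : v ∈ (I • ⊤ : Submodule A (ι → A))) (i : ι) : v i ∈ I := by
  simpa using smul_top_le_comap_smul_top I (LinearMap.proj i) hv

lemma eq_zero_of_forall_isMaximal_mem [IsJacobsonRing A] [IsReduced A] {a : A}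
    (h : ∀ m : Ideal A, m.IsMaximal → a ∈ m) : a = 0 := by
  have ha : a ∈ (⊥ : Ideal A).jacobson := by
    rw [Ideal.jacobson_bot, Ring.jacobson_eq_sInf_isMaximal]
    exact Submodule.mem_sInf.mpr h
  rwa [IsJacobsonRing.out' _ Ideal.isRadical_bot, Ideal.mem_bot] at ha

lemma smul_eq_zero_of_forall_ker_le_smul_top [IsJacobsonRing A] [IsReduced A] {ι : Type*}
    (f : (ι → A) →ₗ[A] M) {r : A}
    (h : ∀ m : Ideal A, m.IsMaximal → r ∉ m → LinearMap.ker f ≤ m • ⊤) {v : ι → A}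
    (hv : f v = 0) : r • v = 0 := by
  funext i
  refine eq_zero_of_forall_isMaximal_mem fun m hm => ?_
  by_cases hr : r ∈ m
  · exact m.mul_mem_right _ hr
  · exact m.mul_mem_left _ (apply_mem_of_mem_smul_top (h m hm hr hv) i)

lemma exists_sub_one_mem_and_smul_mem_range_of_surjective_comp_mkQ [Module.Finite A M]
    (I : Ideal A) (f : N →ₗ[A] M) (hf : Surjective ((I • ⊤ : Submodule A M).mkQ ∘ₗ f)) :
    ∃ r, r - 1 ∈ I ∧ ∀ y, r • y ∈ LinearMap.range f := by
  have htop : (⊤ : Submodule A M) ≤ LinearMap.range f ⊔ I • ⊤ := by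
    rw [top_le_iff, sup_comm, ← map_mkQ_eq_top, ← LinearMap.range_comp,
      LinearMap.range_eq_top.mpr hf]
  obtain ⟨r, hr, hle⟩ :=
    exists_sub_one_mem_and_smul_le_of_fg_of_le_sup (Module.finite_def.mp ‹_›) le_rfl htop
  exact ⟨r, hr, fun y => hle (smul_mem_pointwise_smul y r ⊤ trivial)⟩

lemma surjective_comp_mkQ_of_smul_mem_range {m : Ideal A} (hm : m.IsMaximal) {r : A}
    (hr : r ∉ m) (f : N →ₗ[A] M) (h : ∀ y, r • y ∈ LinearMap.range f) :
    Surjective ((m • ⊤ : Submodule A M).mkQ ∘ₗ f) := by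
  intro z
  obtain ⟨y, rfl⟩ := Submodule.Quotient.mk_surjective _ z
  obtain ⟨a, j, hj, haj⟩ := hm.exists_inv hr
  obtain ⟨c, hc⟩ := h y
  refine ⟨a • c, ?_⟩
  have hy : a • r • y - y = -(j • y) := by
    rw [smul_smul, eq_sub_of_add_eq haj, sub_smul, one_smul]
    abel
  rw [LinearMap.comp_apply, map_smul, hc, mkQ_apply, Submodule.Quotient.eq, hy]
  exact neg_mem (smul_mem_smul hj trivial)

lemma LocalizedModule.map_bijective_of_smul_mem_range_of_smul_ker (S : Submonoid A) {r : A}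
    (hr : r ∈ S) (f : N →ₗ[A] M) (hrange : ∀ y, r • y ∈ LinearMap.range f)
    (hker : ∀ v, f v = 0 → r • v = 0) : Bijective (LocalizedModule.map S f) := by
  constructor
  · rw [injective_iff_map_eq_zero]
    intro x hx
    induction x using LocalizedModule.induction_on with
    | h v s =>
      rw [LocalizedModule.map_mk, ← LocalizedModule.zero_mk s, LocalizedModule.mk_eq] at hx
      obtain ⟨u, hu⟩ := hx
      simp only [smul_zero, Submonoid.smul_def, ← map_smul] at hu
      rw [← LocalizedModule.zero_mk s, LocalizedModule.mk_eq]
      refine ⟨⟨r, hr⟩ * u, ?_⟩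
      simpa only [smul_zero, Submonoid.smul_def, Submonoid.coe_mul, mul_smul] using hker _ hu
  · intro x
    induction x using LocalizedModule.induction_on with
    | h y s =>
      obtain ⟨c, hc⟩ := hrange y
      refine ⟨LocalizedModule.mk c (⟨r, hr⟩ * s), ?_⟩
      rw [LocalizedModule.map_mk, hc]
      exact LocalizedModule.mk_cancel_common_left ⟨r, hr⟩ s y

theorem nonempty_basis_localizedModule_of_finrank_fiber_eq {k : Type*} [Field k] [Algebra k A]
    [IsJacobsonRing A] [IsReduced A] [Module.Finite A M] [Module k M] [IsScalarTower k A M]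
    {n : ℕ} (hres : ∀ m : Ideal A, m.IsMaximal → Surjective (algebraMap k (A ⧸ m)))
    (hfib : ∀ m : Ideal A, m.IsMaximal → finrank k (M ⧸ (m • ⊤ : Submodule A M)) = n)
    (p : Ideal A) [p.IsPrime] :
    Nonempty (Basis (Fin n) (Localization.AtPrime p) (LocalizedModule p.primeCompl M)) := by
  obtain ⟨m, hm, hpm⟩ := p.exists_le_maximal (Ideal.IsPrime.ne_top ‹_›)
  obtain ⟨f, hf⟩ := exists_surjective_comp_mkQ_of_finrank_eq (hres m hm) (hfib m hm)
  obtain ⟨r, hr1, hrange⟩ := exists_sub_one_mem_and_smul_mem_range_of_surjective_comp_mkQ m f hf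
  have hrm : r ∉ m := fun hr => hm.ne_top <| (Ideal.eq_top_iff_one m).mpr <| by
    simpa using m.sub_mem hr hr1
  have hker : ∀ v, f v = 0 → r • v = 0 := fun v =>
    smul_eq_zero_of_forall_ker_le_smul_top f fun m' hm' hrm' =>
      ker_le_smul_top_of_surjective_comp_mkQ (hres m' hm') f (by simpa using hfib m' hm')
        (surjective_comp_mkQ_of_smul_mem_range hm' hrm' f hrange)
  have hbij := LocalizedModule.map_bijective_of_smul_mem_range_of_smul_ker p.primeCompl
    (fun hrp => hrm (hpm hrp)) f hrange hker
  exact ⟨((Pi.basisFun A (Fin n)).ofIsLocalizedModule (Localization.AtPrime p) p.primeCompl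
    (LocalizedModule.mkLinearMap p.primeCompl _)).map (LinearEquiv.ofBijective _ hbij)⟩

end

/-- Hartshorne, Exercise II.5.8(c): if `A` is a reduced finitely generated commutative
algebra over an algebraically closed field `k` and `M` a finitely generated `A`-module
such that every fiber `M/mM` at a maximal ideal `m` has `k`-dimension exactly `n`, then
`M` is projective of constant rank `n` (its localization at every prime is free of
rank `n`). -/
theorem projective_of_constant_fiber_dim (k : Type*) [Field k] [IsAlgClosed k]
    (A : Type*) [CommRing A] [Algebra k A] [Algebra.FiniteType k A] [IsReduced A]
    (M : Type*) [AddCommGroup M] [Module A M] [Module.Finite A M]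
    [Module k M] [IsScalarTower k A M] (n : ℕ)
    (hfib : ∀ m : Ideal A, m.IsMaximal →
      Module.finrank k (M ⧸ (m • ⊤ : Submodule A M)) = n) :
    Module.Projective A M ∧
      ∀ (p : Ideal A) (_ : p.IsPrime),
        haveI : p.IsPrime := ‹_›
        Module.Free (Localization.AtPrime p) (LocalizedModule p.primeCompl M) ∧
        Module.finrank (Localization.AtPrime p) (LocalizedModule p.primeCompl M) = n := by
  have : IsNoetherianRing A := Algebra.FiniteType.isNoetherianRing k A
  have : IsJacobsonRing A := isJacobsonRing_of_finiteType (A := k)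
  have hbasis := nonempty_basis_localizedModule_of_finrank_fiber_eq
    (fun m _ => Ideal.Quotient.algebraMap_surjective_of_isAlgClosed k m) hfib
  refine ⟨?_, fun p _ => ?_⟩
  · have := Module.finitePresentation_of_finite A M
    exact Module.projective_of_localization_maximal fun m _ => .of_basis (hbasis m).some
  · obtain ⟨b⟩ := hbasis p
    exact ⟨.of_basis b, by rw [finrank_eq_card_basis b, Fintype.card_fin]⟩
end

section
/- Let k ⊂ K be an extension of fields, R a commutative k-algebra, and M a finitely presented R-module. If M ⊗_k K is a projective module over R ⊗_k K, then M is a projective R-module. -/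
open TensorProduct

/-!
Over a field `k` the unit `k → K` has a `k`-linear retraction, so after base change to `R` the
map `R → R ⊗[k] K` has an `R`-linear retraction `π` with `π 1 = 1`, and `m ↦ π ⊗ id (1 ⊗ m)`
exhibits `M` as an `R`-linear retract of `(R ⊗[k] K) ⊗[R] M`. That module is flat over
`R ⊗[k] K`, which is free over `R`, hence it is flat over `R`, and so is its retract `M`.
A finitely presented flat module is projective.
-/

theorem exists_linearMap_apply_one_eq_one (k K : Type*) [Field k] [Ring K] [Nontrivial K]
    [Algebra k K] : ∃ g : K →ₗ[k] k, g 1 = 1 := by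
  obtain ⟨g, hg⟩ := (Algebra.linearMap k K).exists_leftInverse_of_injective
    (LinearMap.ker_eq_bot.mpr (algebraMap k K).injective)
  exact ⟨g, by simpa using LinearMap.congr_fun hg 1⟩

theorem exists_linearMap_tensorProduct_apply_one_eq_one (k K R : Type*) [Field k] [Ring K]
    [Nontrivial K] [Algebra k K] [CommRing R] [Algebra k R] :
    ∃ π : R ⊗[k] K →ₗ[R] R, π 1 = 1 := by
  obtain ⟨g, hg⟩ := exists_linearMap_apply_one_eq_one k K
  refine ⟨(AlgebraTensorModule.rid k R R).toLinearMap ∘ₗ g.baseChange R, ?_⟩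
  simp [Algebra.TensorProduct.one_def, hg]

theorem Module.Flat.of_flat_tensorProduct_of_retraction {R A : Type*} [CommRing R] [CommRing A]
    [Algebra R A] [Module.Flat R A] (M : Type*) [AddCommGroup M] [Module R M]
    (π : A →ₗ[R] R) (hπ : π 1 = 1) [Module.Flat A (A ⊗[R] M)] : Module.Flat R M := by
  have : Module.Flat R (A ⊗[R] M) := Module.Flat.trans R A (A ⊗[R] M)
  refine Module.Flat.of_retract (TensorProduct.mk R A M 1)
    ((TensorProduct.lid R M).toLinearMap ∘ₗ π.rTensor M) ?_
  ext m
  simp [hπ]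

/-- Descent of projectivity along a field extension `k ⊆ K`: if `R` is a commutative
`k`-algebra and `M` a finitely presented `R`-module whose base change `M ⊗_k K`, realized
as `(R ⊗[k] K) ⊗[R] M`, is projective over `R ⊗[k] K`, then `M` is projective over `R`. -/
theorem projective_of_projective_baseChange_field (k K : Type*) [Field k] [Field K]
    [Algebra k K] (R : Type*) [CommRing R] [Algebra k R]
    (M : Type*) [AddCommGroup M] [Module R M] [Module.FinitePresentation R M]
    (h : Module.Projective (R ⊗[k] K) ((R ⊗[k] K) ⊗[R] M)) :
    Module.Projective R M := by
  obtain ⟨π, hπ⟩ := exists_linearMap_tensorProduct_apply_one_eq_one k K R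
  have : Module.Flat (R ⊗[k] K) ((R ⊗[k] K) ⊗[R] M) := Module.Flat.of_projective
  have : Module.Flat R M := Module.Flat.of_flat_tensorProduct_of_retraction M π hπ
  exact Module.Flat.projective_of_finitePresentation
end

section
/- Let R → S be a faithfully flat ring homomorphism of commutative rings, and M a finitely generated R-module such that S ⊗_R M is a free S-module of rank n. Then M is a projective R-module, and for every prime ideal p of R the localization M_p is free of rank n over R_p. -/
/-!
Finite presentation and flatness both descend along a faithfully flat map, so `M` is finitely
presented and flat, hence projective, and free at every prime `p` of `R`. Its rank there equals
the rank of `S ⊗[R] M` at any prime of `S` lying over `p`, and such a prime exists because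
`Spec S → Spec R` is surjective.
-/

open TensorProduct

namespace Module

variable {R : Type*} (S : Type*) [CommRing R] [CommRing S] [Algebra R S] [FaithfullyFlat R S]
  {M : Type*} [AddCommGroup M] [Module R M]

/-- By flatness, `S ⊗[R] ker π` is the kernel of `S ⊗[R] π` for a surjection `π : Rᵏ → M`,
which is finitely generated because `S ⊗[R] M` is finitely presented. -/
lemma FinitePresentation.of_finitePresentation_tensorProduct_of_faithfullyFlat
    [FinitePresentation S (S ⊗[R] M)] : FinitePresentation R M := by
  have : Module.Finite R M := .of_finite_tensorProduct_of_faithfullyFlat S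
  obtain ⟨k, π, hπ⟩ := Module.Finite.exists_fin' R M
  have : Module.Finite S (LinearMap.ker (AlgebraTensorModule.lTensor S S π)) :=
    Module.Finite.iff_fg.mpr (FinitePresentation.fg_ker _ (LinearMap.lTensor_surjective S hπ))
  have : Module.Finite S (S ⊗[R] LinearMap.ker π) := .equiv (LinearMap.tensorKerEquiv S S π).symm
  have : Module.Finite R (LinearMap.ker π) := .of_finite_tensorProduct_of_faithfullyFlat S
  exact finitePresentation_of_surjective π hπ (Module.Finite.iff_fg.mp this)

lemma rankAtStalk_eq_card_of_basis_tensorProduct [Flat R M] [Module.Finite R M]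
    {ι : Type*} [Fintype ι] (b : Basis ι S (S ⊗[R] M)) (p : PrimeSpectrum R) :
    rankAtStalk M p = Fintype.card ι := by
  obtain ⟨P, rfl⟩ := PrimeSpectrum.comap_surjective_of_faithfullyFlat (B := S) p
  have : Nontrivial S := P.nontrivial
  have : Free S (S ⊗[R] M) := .of_basis b
  rw [← rankAtStalk_baseChange, rankAtStalk_eq_finrank_of_free, finrank_eq_card_basis b,
    Pi.natCast_apply, Nat.cast_id]

end Module

theorem descent_projective_of_faithfullyFlat_general (R S : Type*) [CommRing R] [CommRing S]
    [Algebra R S] [Module.FaithfullyFlat R S]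
    (M : Type*) [AddCommGroup M] [Module R M]
    (n : ℕ) (b : Module.Basis (Fin n) S (S ⊗[R] M)) :
    Module.Projective R M ∧
      ∀ (p : Ideal R) (_ : p.IsPrime),
        haveI : p.IsPrime := ‹_›
        Module.Free (Localization.AtPrime p) (LocalizedModule p.primeCompl M) ∧
        Module.finrank (Localization.AtPrime p) (LocalizedModule p.primeCompl M) = n := by
  have : Module.Free S (S ⊗[R] M) := .of_basis b
  have : Module.Finite S (S ⊗[R] M) := .of_basis b
  have : Module.FinitePresentation S (S ⊗[R] M) := Module.finitePresentation_of_projective _ _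
  have : Module.FinitePresentation R M :=
    .of_finitePresentation_tensorProduct_of_faithfullyFlat S
  have : Module.Flat R M := .of_flat_tensorProduct R M S
  refine ⟨Module.Flat.projective_of_finitePresentation, fun p hp ↦
    ⟨Module.free_of_flat_of_isLocalRing, ?_⟩⟩
  exact (Module.rankAtStalk_eq_card_of_basis_tensorProduct S b ⟨p, hp⟩).trans
    (Fintype.card_fin n)

/-- Faithfully flat descent: if `R → S` is faithfully flat, `M` a finitely generated
`R`-module with `S ⊗[R] M` free of rank `n` over `S`, then `M` is projective and all its
localizations at primes of `R` are free of rank `n`. -/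
theorem descent_projective_of_faithfullyFlat (R S : Type*) [CommRing R] [CommRing S]
    [Algebra R S] [Module.FaithfullyFlat R S]
    (M : Type*) [AddCommGroup M] [Module R M] [Module.Finite R M]
    (n : ℕ) (b : Module.Basis (Fin n) S (S ⊗[R] M)) :
    Module.Projective R M ∧
      ∀ (p : Ideal R) (_ : p.IsPrime),
        haveI : p.IsPrime := ‹_›
        Module.Free (Localization.AtPrime p) (LocalizedModule p.primeCompl M) ∧
        Module.finrank (Localization.AtPrime p) (LocalizedModule p.primeCompl M) = n :=
  descent_projective_of_faithfullyFlat_general R S M n b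
end
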